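/- Lower bound for Brill-Noether rank under wedging a loop: if Γ = Γ₁ ∧ Γ₂ with Γ₂ a loop wedged at q, and W^r_d(Γ₁) ≠ ∅, then w^r_{d+1}(Γ) ≥ w^r_d(Γ₁). -/

import Mathlib

open Finsupp

/-- The degree of a divisor: the sum of its coefficients. -/
def deg {Γ : Type*} (D : Γ →₀ ℤ) : ℤ := D.sum fun _ n => n

open Classical in
/-- The degree of the restriction of a divisor to a subset `S` of the graph. -/
noncomputable def degOn {Γ : Type*} (D : Γ →₀ ℤ) (S : Set Γ) : ℤ :=
  ∑ x ∈ D.support, if x ∈ S then D x else 0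

/-!
After q-reduction, an effective divisor E on Γ has at most one chip off Γ₁, at some
p ∈ Γ₂ \ {q}. Moving that chip to q (or adding a chip at q if there is none) gives an
effective divisor of the same degree on Γ₁, which is dominated by a rank-r divisor D₁ of
degree d on Γ₁; then D₁ + (p) (resp. D₁ + (q)) has rank ≥ r and degree d + 1 on Γ and
dominates E.
-/

namespace Divisor

variable {Γ : Type*}

theorem deg_eq_degree (D : Γ →₀ ℤ) : deg D = D.degree := rfl

theorem deg_add (D E : Γ →₀ ℤ) : deg (D + E) = deg D + deg E := map_add Finsupp.degree D E

theorem deg_single (p : Γ) (n : ℤ) : deg (Finsupp.single p n) = n := degree_single p n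

theorem apply_nonneg {D : Γ →₀ ℤ} (hD : 0 ≤ D) (x : Γ) : 0 ≤ D x := hD x

theorem deg_nonneg {D : Γ →₀ ℤ} (hD : 0 ≤ D) : 0 ≤ deg D :=
  Finset.sum_nonneg fun x _ => apply_nonneg hD x

theorem deg_mono {D E : Γ →₀ ℤ} (h : D ≤ E) : deg D ≤ deg E := by
  have := deg_nonneg (sub_nonneg.mpr h)
  rw [deg_eq_degree, map_sub] at this
  rwa [deg_eq_degree, deg_eq_degree, ← sub_nonneg]

theorem eq_zero_of_nonneg_of_deg_nonpos {D : Γ →₀ ℤ} (hD : 0 ≤ D) (h : deg D ≤ 0) :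
    D = 0 := by
  have hsum : ∑ x ∈ D.support, D x = 0 := le_antisymm h (deg_nonneg hD)
  ext x
  by_contra hx
  exact hx ((Finset.sum_eq_zero_iff_of_nonneg fun y _ => hD y).mp hsum x
    (Finsupp.mem_support_iff.mpr hx))

theorem eq_zero_or_eq_single_of_deg_le_one {D : Γ →₀ ℤ} (hD : 0 ≤ D) (h : deg D ≤ 1) :
    D = 0 ∨ ∃ p, D = Finsupp.single p 1 := by
  by_cases hD0 : D = 0
  · exact .inl hD0
  obtain ⟨p, hp⟩ := Finsupp.support_nonempty_iff.mpr hD0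
  have hDp : 1 ≤ D p := by
    have := apply_nonneg hD p
    have := Finsupp.mem_support_iff.mp hp
    omega
  have hrest : 0 ≤ D - Finsupp.single p 1 := by
    intro x
    rcases eq_or_ne x p with rfl | hxp
    · simpa using hDp
    · simpa [Finsupp.single_apply, hxp.symm] using hD x
  have hrest_deg : deg (D - Finsupp.single p 1) ≤ 0 := by
    rw [deg_eq_degree, map_sub, ← deg_eq_degree, ← deg_eq_degree, deg_single]
    omega
  exact .inr ⟨p, sub_eq_zero.mp (eq_zero_of_nonneg_of_deg_nonpos hrest hrest_deg)⟩

theorem degOn_eq_deg_filter (D : Γ →₀ ℤ) (S : Set Γ) [DecidablePred (· ∈ S)] :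
    degOn D S = deg (D.filter (· ∈ S)) := by
  rw [deg_eq_degree, degree_apply, Finsupp.support_filter, Finset.sum_filter, degOn]
  refine Finset.sum_congr rfl fun x _ => ?_
  by_cases hx : x ∈ S <;> simp [hx]

theorem filter_nonneg {D : Γ →₀ ℤ} (hD : 0 ≤ D) (P : Γ → Prop) [DecidablePred P] :
    0 ≤ D.filter P := fun x => by
  rw [Finsupp.filter_apply]
  split_ifs
  exacts [apply_nonneg hD x, le_rfl]

theorem support_add_single_subset {D : Γ →₀ ℤ} {S : Set Γ} (hD : ↑D.support ⊆ S)
    {q : Γ} (hq : q ∈ S) (n : ℤ) : ↑(D + Finsupp.single q n).support ⊆ S := by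
  classical
  intro x hx
  rcases Finset.mem_union.mp (Finsupp.support_add hx) with hx | hx
  · exact hD hx
  · rw [Finset.mem_singleton.mp (Finsupp.support_single_subset hx)]
    exact hq

theorem exists_le_add_single_of_degOn_le_one {Γ₁ Γ₂ : Set Γ} {q : Γ} (hq₁ : q ∈ Γ₁)
    (hq₂ : q ∈ Γ₂) (hcover : Γ₁ ∪ Γ₂ = Set.univ) {E : Γ →₀ ℤ} (hE : 0 ≤ E)
    (hreduced : degOn E (Γ₂ \ {q}) ≤ 1) :
    ∃ G : Γ →₀ ℤ, ∃ p ∈ Γ₂, 0 ≤ G ∧ ↑G.support ⊆ Γ₁ ∧ deg G = deg E ∧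
      E ≤ G + Finsupp.single p 1 := by
  classical
  set E₁ := E.filter (· ∈ Γ₁)
  set H := E.filter (· ∉ Γ₁)
  have hsplit : E₁ + H = E := Finsupp.filter_add_filter_not E (· ∈ Γ₁)
  have hΓ₂ : ∀ x ∉ Γ₁, x ∈ Γ₂ := fun x hx =>
    ((Set.mem_union _ _ _).mp (hcover ▸ Set.mem_univ x)).resolve_left hx
  have hE₁_supp : ↑E₁.support ⊆ Γ₁ := fun x hx => (Finset.mem_filter.mp hx).2
  have hH : 0 ≤ H := filter_nonneg hE _
  have hH_le : H ≤ E.filter (· ∈ Γ₂ \ {q}) := by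
    intro x
    by_cases hx : x ∈ Γ₁
    · simpa [H, hx] using apply_nonneg (filter_nonneg hE (· ∈ Γ₂ \ {q})) x
    · have hxq : x ≠ q := fun h => hx (h ▸ hq₁)
      simp [H, hx, hΓ₂ x hx, hxq]
  have hH_deg : deg H ≤ 1 :=
    (deg_mono hH_le).trans ((degOn_eq_deg_filter E _).symm.le.trans hreduced)
  rcases eq_zero_or_eq_single_of_deg_le_one hH hH_deg with hH0 | ⟨p, hHp⟩
  · rw [hH0, add_zero] at hsplit
    refine ⟨E₁, q, hq₂, filter_nonneg hE _, hE₁_supp, by rw [hsplit], ?_⟩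
    rw [hsplit]
    exact le_add_of_nonneg_right (Finsupp.single_nonneg.mpr zero_le_one)
  · have hp : p ∉ Γ₁ := by
      have : p ∈ H.support := by simp [hHp]
      exact (Finset.mem_filter.mp this).2
    rw [hHp] at hsplit
    refine ⟨E₁ + Finsupp.single q 1, p, hΓ₂ p hp,
      add_nonneg (filter_nonneg hE _) (Finsupp.single_nonneg.mpr zero_le_one),
      support_add_single_subset hE₁_supp hq₁ 1, ?_, ?_⟩
    · rw [← hsplit, deg_add, deg_add, deg_single, deg_single]
    · rw [← hsplit, add_right_comm]
      exact le_add_of_nonneg_right (Finsupp.single_nonneg.mpr zero_le_one)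

end Divisor

open Divisor

theorem wBN_lower_bound_general {Γ : Type*} (Γ₁ Γ₂ : Set Γ) (q : Γ)
    (hq₁ : q ∈ Γ₁) (hq₂ : q ∈ Γ₂)
    (hcover : Γ₁ ∪ Γ₂ = Set.univ)
    (lineq : (Γ →₀ ℤ) → (Γ →₀ ℤ) → Prop)
    (hdeg : ∀ D E : Γ →₀ ℤ, lineq D E → deg D = deg E)
    (rankGe rankGe₁ : (Γ →₀ ℤ) → ℕ → Prop)  -- rank ≥ r on Γ, resp. on Γ₁
    (r d : ℕ)
    -- q-reduction: every effective divisor is equivalent to an effective divisor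
    -- with at most one chip on Γ₂ \ {q}:
    (hreduce : ∀ E : Γ →₀ ℤ, 0 ≤ E → ∃ E' : Γ →₀ ℤ, 0 ≤ E' ∧ lineq E E' ∧
      degOn E' (Γ₂ \ {q}) ≤ 1)
    -- adding a point of Γ₂ to a divisor of rank ≥ r on Γ₁ yields rank ≥ r on Γ:
    (hwedge : ∀ D : Γ →₀ ℤ, ↑D.support ⊆ Γ₁ → rankGe₁ D r → ∀ p ∈ Γ₂,
      rankGe (D + Finsupp.single p 1) r)
    -- linear equivalence preserves the property of being dominated by a divisor
    -- of degree d+1 and rank ≥ r: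
    (hdom : ∀ E E' : Γ →₀ ℤ, lineq E E' →
      (∃ D : Γ →₀ ℤ, deg D = (d : ℤ) + 1 ∧ rankGe D r ∧ E' ≤ D) →
      (∃ D : Γ →₀ ℤ, deg D = (d : ℤ) + 1 ∧ rankGe D r ∧ E ≤ D))
    (w w₁ : ℤ)
    -- w₁ = w^r_d(Γ₁):
    (hw₁ : IsGreatest {k : ℤ | ∀ E : Γ →₀ ℤ, 0 ≤ E → ↑E.support ⊆ Γ₁ →
      deg E = r + k → ∃ D : Γ →₀ ℤ, ↑D.support ⊆ Γ₁ ∧ deg D = d ∧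
        rankGe₁ D r ∧ E ≤ D} w₁)
    -- w = w^r_{d+1}(Γ):
    (hw : IsGreatest {k : ℤ | ∀ E : Γ →₀ ℤ, 0 ≤ E → deg E = r + k →
      ∃ D : Γ →₀ ℤ, deg D = (d : ℤ) + 1 ∧ rankGe D r ∧ E ≤ D} w) :
    w₁ ≤ w := by
  apply hw.2
  intro E hE hE_deg
  obtain ⟨E', hE', hlin, hreduced⟩ := hreduce E hE
  apply hdom E E' hlin
  obtain ⟨G, p, hp, hG, hG_supp, hG_deg, hE'_le⟩ :=
    exists_le_add_single_of_degOn_le_one hq₁ hq₂ hcover hE' hreduced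
  obtain ⟨D₁, hD₁_supp, hD₁_deg, hD₁_rank, hGD₁⟩ :=
    hw₁.1 G hG hG_supp (by rw [hG_deg, ← hdeg E E' hlin, hE_deg])
  exact ⟨D₁ + Finsupp.single p 1, by rw [deg_add, deg_single, hD₁_deg],
    hwedge D₁ hD₁_supp hD₁_rank p hp, hE'_le.trans (add_le_add_left hGD₁ _)⟩

/-- Lower bound for the Brill-Noether rank under wedging a loop: if
Γ = Γ₁ ∧ Γ₂ with Γ₂ a loop wedged on at the point q, and W^r_d(Γ₁) ≠ ∅, then
w^r_{d+1}(Γ) ≥ w^r_d(Γ₁).  The Brill-Noether ranks `w` and `w₁` are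
characterized as the greatest integers `k` such that every effective divisor of
degree r + k (on Γ, resp. on Γ₁) is dominated by some divisor of the relevant
degree and rank (`rankGe D r` means D has rank ≥ r on Γ; `rankGe₁ D r` means the
divisor D, supported on Γ₁, has rank ≥ r on Γ₁). -/
theorem wBN_lower_bound {Γ : Type*} (Γ₁ Γ₂ : Set Γ) (q : Γ)
    (hq₁ : q ∈ Γ₁) (hq₂ : q ∈ Γ₂)
    (hcover : Γ₁ ∪ Γ₂ = Set.univ) (hinter : Γ₁ ∩ Γ₂ = {q})
    (lineq : (Γ →₀ ℤ) → (Γ →₀ ℤ) → Prop)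
    (hequiv : Equivalence lineq)
    (hdeg : ∀ D E : Γ →₀ ℤ, lineq D E → deg D = deg E)
    (rankGe rankGe₁ : (Γ →₀ ℤ) → ℕ → Prop)  -- rank ≥ r on Γ, resp. on Γ₁
    (r d : ℕ)
    -- W^r_d(Γ₁) is nonempty:
    (hWne : ∃ D : Γ →₀ ℤ, ↑D.support ⊆ Γ₁ ∧ deg D = d ∧ rankGe₁ D r)
    -- q-reduction: every effective divisor is equivalent to an effective divisor
    -- with at most one chip on Γ₂ \ {q}:
    (hreduce : ∀ E : Γ →₀ ℤ, 0 ≤ E → ∃ E' : Γ →₀ ℤ, 0 ≤ E' ∧ lineq E E' ∧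
      degOn E' (Γ₂ \ {q}) ≤ 1)
    -- adding a point of Γ₂ to a divisor of rank ≥ r on Γ₁ yields rank ≥ r on Γ:
    (hwedge : ∀ D : Γ →₀ ℤ, ↑D.support ⊆ Γ₁ → rankGe₁ D r → ∀ p ∈ Γ₂,
      rankGe (D + Finsupp.single p 1) r)
    -- linear equivalence preserves the property of being dominated by a divisor
    -- of degree d+1 and rank ≥ r:
    (hdom : ∀ E E' : Γ →₀ ℤ, lineq E E' →
      (∃ D : Γ →₀ ℤ, deg D = (d : ℤ) + 1 ∧ rankGe D r ∧ E' ≤ D) →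
      (∃ D : Γ →₀ ℤ, deg D = (d : ℤ) + 1 ∧ rankGe D r ∧ E ≤ D))
    (w w₁ : ℤ)
    -- w₁ = w^r_d(Γ₁):
    (hw₁ : IsGreatest {k : ℤ | ∀ E : Γ →₀ ℤ, 0 ≤ E → ↑E.support ⊆ Γ₁ →
      deg E = r + k → ∃ D : Γ →₀ ℤ, ↑D.support ⊆ Γ₁ ∧ deg D = d ∧
        rankGe₁ D r ∧ E ≤ D} w₁)
    -- w = w^r_{d+1}(Γ):
    (hw : IsGreatest {k : ℤ | ∀ E : Γ →₀ ℤ, 0 ≤ E → deg E = r + k →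
      ∃ D : Γ →₀ ℤ, deg D = (d : ℤ) + 1 ∧ rankGe D r ∧ E ≤ D} w) :
    w₁ ≤ w :=
  wBN_lower_bound_general Γ₁ Γ₂ q hq₁ hq₂ hcover lineq hdeg rankGe rankGe₁ r d hreduce hwedge hdom w
    w₁ hw₁ hw
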